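/- Let C be a normal cone with nonempty interior in a Banach space, and h : C → C continuous, positively homogeneous, and order-preserving. If x ∈ int C and λ > 0 satisfy h(x) ≤ λ x, then for every y ∈ C, limsup_k ‖h^k(y)‖^{1/k} ≤ λ. Hence the cone spectral radius r_C(h) = sup_{y∈C} limsup_k ‖h^k(y)‖^{1/k} satisfies r_C(h) ≤ cw(h) := inf{λ > 0 : ∃x ∈ int C, h(x) ≤ λx}. -/

import Mathlib

open Set Filter

/-- The Collatz-Wielandt number `cw(f) = inf {λ > 0 : ∃ x ∈ int C, f(x) ≤ λ x}`. -/
noncomputable def collatzWielandt {X : Type*} [NormedAddCommGroup X] [NormedSpace ℝ X]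
    (C : Set X) (f : X → X) : ENNReal :=
  ⨅ (l : ℝ) (_ : 0 < l ∧ ∃ x ∈ interior C, l • x - f x ∈ C), ENNReal.ofReal l

/-- The cone spectral radius `r_C(h) = sup_{x ∈ C} limsup_k ‖h^k(x)‖^{1/k}`. -/
noncomputable def coneSpectralRadius {X : Type*} [NormedAddCommGroup X]
    (C : Set X) (h : X → X) : ENNReal :=
  ⨆ (x : X) (_ : x ∈ C),
    Filter.limsup (fun k : ℕ => ENNReal.ofReal (‖h^[k] x‖ ^ ((k : ℝ)⁻¹))) atTop

/-!
Since `x` is interior, `y ≤ b x` for some `b > 0`. Monotonicity and homogeneity of `h`, together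
with `h x ≤ l x`, give `h^[k] y ≤ b l^k x` by induction, so normality bounds `‖h^[k] y‖` by
`M b ‖x‖ l^k`, and the `k`-th root of this tends to `l`. Taking the supremum over `y` and the
infimum over admissible `(l, x)` compares the two numbers.
-/

theorem limsup_ofReal_rpow_inv_le {u : ℕ → ℝ} {A l : ℝ} (hu₀ : ∀ k, 0 ≤ u k) (hl : 0 ≤ l)
    (hu : ∀ k, u k ≤ A * l ^ k) :
    limsup (fun k : ℕ => ENNReal.ofReal (u k ^ ((k : ℝ)⁻¹))) atTop ≤ ENNReal.ofReal l := by
  -- a positive constant, so that `B ^ (1 / k) → 1`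
  set B := max A 1
  have hB : 0 < B := lt_max_of_lt_right one_pos
  have hroot : Tendsto (fun k : ℕ => B ^ ((k : ℝ)⁻¹) * l) atTop (nhds l) := by
    have hinv : Tendsto (fun k : ℕ => ((k : ℝ))⁻¹) atTop (nhds 0) :=
      tendsto_inv_atTop_zero.comp tendsto_natCast_atTop_atTop
    have := ((Real.continuousAt_const_rpow hB.ne').tendsto.comp hinv).mul_const l
    simpa using this
  calc limsup (fun k : ℕ => ENNReal.ofReal (u k ^ ((k : ℝ)⁻¹))) atTop
      ≤ limsup (fun k : ℕ => ENNReal.ofReal (B ^ ((k : ℝ)⁻¹) * l)) atTop := by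
        refine limsup_le_limsup ?_ (by isBoundedDefault) (by isBoundedDefault)
        filter_upwards [eventually_ne_atTop 0] with k hk
        refine ENNReal.ofReal_le_ofReal ?_
        calc u k ^ ((k : ℝ)⁻¹) ≤ (B * l ^ k) ^ ((k : ℝ)⁻¹) := by
              gcongr
              · exact hu₀ k
              · exact (hu k).trans (by gcongr; exact le_max_left _ _)
          _ = B ^ ((k : ℝ)⁻¹) * l := by
              rw [Real.mul_rpow hB.le (by positivity), Real.pow_rpow_inv_natCast hl hk]
    _ = ENNReal.ofReal l := ((ENNReal.continuous_ofReal.tendsto l).comp hroot).limsup_eq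

section Cone

variable {X : Type*} [AddCommGroup X] [Module ℝ X] {C : Set X}

theorem add_mem_of_convex_of_smul_mem (hconv : Convex ℝ C)
    (hcone : ∀ t : ℝ, 0 ≤ t → ∀ x ∈ C, t • x ∈ C) {u v : X} (hu : u ∈ C) (hv : v ∈ C) :
    u + v ∈ C := by
  have hmid := hconv hu hv (by norm_num : (0 : ℝ) ≤ 1 / 2) (by norm_num : (0 : ℝ) ≤ 1 / 2)
    (by norm_num)
  convert hcone 2 zero_le_two _ hmid using 1
  rw [smul_add, smul_smul, smul_smul]
  norm_num

theorem smul_sub_iterate_mem (hconv : Convex ℝ C)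
    (hcone : ∀ t : ℝ, 0 ≤ t → ∀ x ∈ C, t • x ∈ C) {h : X → X} (hmaps : MapsTo h C C)
    (hhom : ∀ t : ℝ, 0 < t → ∀ x ∈ C, h (t • x) = t • h x)
    (hmono : ∀ x ∈ C, ∀ y ∈ C, y - x ∈ C → h y - h x ∈ C)
    {x y : X} {l b : ℝ} (hl : 0 < l) (hb : 0 < b) (hx : x ∈ C) (hy : y ∈ C)
    (hxl : l • x - h x ∈ C) (hyb : b • x - y ∈ C) (k : ℕ) :
    (b * l ^ k) • x - h^[k] y ∈ C := by
  induction k with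
  | zero => simpa using hyb
  | succ k ih =>
    have hc : 0 < b * l ^ k := by positivity
    have hstep : (b * l ^ k) • h x - h (h^[k] y) ∈ C := by
      rw [← hhom _ hc x hx]
      exact hmono _ (hmaps.iterate k hy) _ (hcone _ hc.le _ hx) ih
    convert add_mem_of_convex_of_smul_mem hconv hcone (hcone _ hc.le _ hxl) hstep using 1
    rw [Function.iterate_succ_apply', smul_sub, smul_smul, pow_succ]
    module

end Cone

theorem exists_pos_smul_sub_mem_of_mem_interior {X : Type*} [NormedAddCommGroup X]
    [NormedSpace ℝ X] {C : Set X} (hcone : ∀ t : ℝ, 0 ≤ t → ∀ x ∈ C, t • x ∈ C) {x : X}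
    (hx : x ∈ interior C) (y : X) : ∃ b : ℝ, 0 < b ∧ b • x - y ∈ C := by
  have hlim : Tendsto (fun t : ℝ => x - t • y) (nhdsWithin 0 (Ioi 0)) (nhds x) := by
    have hcont : Continuous fun t : ℝ => x - t • y := by fun_prop
    simpa using (hcont.tendsto 0).mono_left nhdsWithin_le_nhds
  obtain ⟨t, hxt, ht⟩ :=
    ((hlim.eventually_mem (mem_interior_iff_mem_nhds.mp hx)).and self_mem_nhdsWithin).exists
  refine ⟨t⁻¹, inv_pos.2 ht, ?_⟩
  simpa [smul_sub, smul_smul, inv_mul_cancel₀ ht.ne'] using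
    hcone t⁻¹ (inv_nonneg.2 ht.le) _ hxt

theorem spectral_radius_le_collatzWielandt_general
    {X : Type*} [NormedAddCommGroup X] [NormedSpace ℝ X]
    (C : Set X)
    (hconv : Convex ℝ C)
    (hcone : ∀ t : ℝ, 0 ≤ t → ∀ x ∈ C, t • x ∈ C)
    (M : ℝ)
    (hnormal : ∀ x y : X, x ∈ C → y - x ∈ C → ‖x‖ ≤ M * ‖y‖)
    (h : X → X) (hmaps : MapsTo h C C)
    (hhom : ∀ t : ℝ, 0 < t → ∀ x ∈ C, h (t • x) = t • h x)
    (hmono : ∀ x ∈ C, ∀ y ∈ C, y - x ∈ C → h y - h x ∈ C) :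
    (∀ x ∈ interior C, ∀ l : ℝ, 0 < l → l • x - h x ∈ C →
      ∀ y ∈ C, Filter.limsup (fun k : ℕ => ENNReal.ofReal (‖h^[k] y‖ ^ ((k : ℝ)⁻¹))) atTop
        ≤ ENNReal.ofReal l) ∧
    coneSpectralRadius C h ≤ collatzWielandt C h := by
  have hbound : ∀ x ∈ interior C, ∀ l : ℝ, 0 < l → l • x - h x ∈ C →
      ∀ y ∈ C, limsup (fun k : ℕ => ENNReal.ofReal (‖h^[k] y‖ ^ ((k : ℝ)⁻¹))) atTop
        ≤ ENNReal.ofReal l := by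
    intro x hx l hl hxl y hy
    obtain ⟨b, hb, hyb⟩ := exists_pos_smul_sub_mem_of_mem_interior hcone hx y
    refine limsup_ofReal_rpow_inv_le (A := M * b * ‖x‖) (fun k => norm_nonneg _) hl.le
      fun k => ?_
    have hiter := smul_sub_iterate_mem hconv hcone hmaps hhom hmono hl hb
      (interior_subset hx) hy hxl hyb k
    calc ‖h^[k] y‖ ≤ M * ‖(b * l ^ k) • x‖ := hnormal _ _ (hmaps.iterate k hy) hiter
      _ = M * b * ‖x‖ * l ^ k := by
        rw [norm_smul, Real.norm_of_nonneg (by positivity)]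
        ring
  exact ⟨hbound, iSup₂_le fun y hy => le_iInf₂ fun l ⟨hl, x, hx, hxl⟩ =>
    hbound x hx l hl hxl y hy⟩

theorem spectral_radius_le_collatzWielandt
    {X : Type*} [NormedAddCommGroup X] [NormedSpace ℝ X] [CompleteSpace X]
    (C : Set X)
    (hclosed : IsClosed C) (hconv : Convex ℝ C)
    (hcone : ∀ t : ℝ, 0 ≤ t → ∀ x ∈ C, t • x ∈ C)
    (hpointed : ∀ x ∈ C, -x ∈ C → x = 0)
    (hint : (interior C).Nonempty)
    (M : ℝ) (hM : 0 < M)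
    (hnormal : ∀ x y : X, x ∈ C → y - x ∈ C → ‖x‖ ≤ M * ‖y‖)
    (h : X → X) (hmaps : MapsTo h C C) (hcont : ContinuousOn h C)
    (hhom : ∀ t : ℝ, 0 < t → ∀ x ∈ C, h (t • x) = t • h x)
    (hmono : ∀ x ∈ C, ∀ y ∈ C, y - x ∈ C → h y - h x ∈ C) :
    (∀ x ∈ interior C, ∀ l : ℝ, 0 < l → l • x - h x ∈ C →
      ∀ y ∈ C, Filter.limsup (fun k : ℕ => ENNReal.ofReal (‖h^[k] y‖ ^ ((k : ℝ)⁻¹))) atTop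
        ≤ ENNReal.ofReal l) ∧
    coneSpectralRadius C h ≤ collatzWielandt C h :=
  spectral_radius_le_collatzWielandt_general C hconv hcone M hnormal h hmaps hhom hmono
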